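/- arXiv:2305.15286 — 3 statements merged into one kernel-verified Lean document; each statement's English description precedes it below -/
import Mathlib

section
/- Let D_1,...,D_n > 0, D_* = min_i D_i, and u_0,...,u_n > 0 with ∑_{i=0}^n u_i = 1. With G as in the previous statement and P_L the orthogonal projection onto L = {z : ∑_{i=0}^n √(u_i) z_i = 0}, for every Y ∈ ℝ^{n+1} one has Yᵀ G Y = (P_L Y)ᵀ G (P_L Y) ≥ D_* ( (P_L Y)_0² / u_0 + ∑_{i=1}^n (P_L Y)_i² ). -/
open Finset

theorem G_quadratic_form_projection_bound (n : ℕ) (Dstar : ℝ) (D : Fin (n+1) → ℝ)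
    (hDstar : 0 < Dstar) (hD : ∀ i, i ≠ 0 → 0 < D i)
    (hDmin : ∀ i, i ≠ 0 → Dstar ≤ D i) (hDeq : ∃ i, i ≠ 0 ∧ D i = Dstar)
    (u : Fin (n+1) → ℝ) (hu : ∀ i, 0 < u i) (hsum : ∑ i, u i = 1)
    (G : Matrix (Fin (n+1)) (Fin (n+1)) ℝ)
    (hG00 : G 0 0 = (∑ i ∈ Finset.univ.erase 0, D i * u i) / u 0)
    (hG0i : ∀ i, i ≠ 0 → G 0 i = -(D i * Real.sqrt (u i / u 0)))
    (hGi0 : ∀ i, i ≠ 0 → G i 0 = -(D i * Real.sqrt (u i / u 0)))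
    (hGii : ∀ i, i ≠ 0 → G i i = D i)
    (hGij : ∀ i j, i ≠ 0 → j ≠ 0 → i ≠ j → G i j = 0)
    (Y P : Fin (n+1) → ℝ)
    (hP : ∀ i, P i = Y i - Real.sqrt (u i) * ∑ j, Real.sqrt (u j) * Y j) :
    (∑ i, ∑ j, Y i * G i j * Y j = ∑ i, ∑ j, P i * G i j * P j)
    ∧ ∑ i, ∑ j, Y i * G i j * Y j
        ≥ Dstar * (P 0 ^ 2 / u 0 + ∑ i ∈ Finset.univ.erase 0, P i ^ 2) := by
  have hu0 : (0:ℝ) < u 0 := hu 0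
  have hsqrt0ne : Real.sqrt (u 0) ≠ 0 := by positivity
  have hsq0 : Real.sqrt (u 0) ^ 2 = u 0 := Real.sq_sqrt hu0.le
  set S := Finset.univ.erase (0 : Fin (n+1)) with hSdef
  set c := ∑ j, Real.sqrt (u j) * Y j with hc
  -- the quadratic form as a sum of squares
  have key : ∀ Z : Fin (n+1) → ℝ,
      ∑ i, ∑ j, Z i * G i j * Z j
        = ∑ i ∈ S, D i * (Real.sqrt (u i / u 0) * Z 0 - Z i) ^ 2 := by
    intro Z
    have hdecomp : ∑ i, ∑ j, Z i * G i j * Z j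
        = (Z 0 * G 0 0 * Z 0 + ∑ j ∈ S, Z 0 * G 0 j * Z j)
          + ∑ i ∈ S, (Z i * G i 0 * Z 0 + Z i * G i i * Z i) := by
      rw [← Finset.add_sum_erase _ _ (Finset.mem_univ (0 : Fin (n+1)))]
      congr 1
      · rw [← Finset.add_sum_erase _ _ (Finset.mem_univ (0 : Fin (n+1)))]
      · apply Finset.sum_congr rfl
        intro i hi
        have hi0 : i ≠ 0 := Finset.ne_of_mem_erase hi
        rw [← Finset.add_sum_erase _ _ (Finset.mem_univ (0 : Fin (n+1)))]
        congr 1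
        rw [Finset.sum_eq_single_of_mem i (Finset.mem_erase.mpr ⟨hi0, Finset.mem_univ i⟩)]
        intro j hj hji
        have hj0 : j ≠ 0 := Finset.ne_of_mem_erase hj
        rw [hGij i j hi0 hj0 (Ne.symm hji)]
        ring
    rw [hdecomp, hG00, Finset.sum_div, Finset.mul_sum, Finset.sum_mul,
      ← Finset.sum_add_distrib, ← Finset.sum_add_distrib]
    apply Finset.sum_congr rfl
    intro i hi
    have hi0 : i ≠ 0 := Finset.ne_of_mem_erase hi
    have hs : Real.sqrt (u i / u 0) ^ 2 = u i / u 0 :=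
      Real.sq_sqrt (div_nonneg (hu i).le hu0.le)
    rw [hG0i i hi0, hGi0 i hi0, hGii i hi0]
    linear_combination (-(D i * Z 0 ^ 2)) * hs
  -- invariance under the projection
  have hPinv : ∀ i, Real.sqrt (u i / u 0) * P 0 - P i
      = Real.sqrt (u i / u 0) * Y 0 - Y i := by
    intro i
    have hdiv : Real.sqrt (u i / u 0) * Real.sqrt (u 0) = Real.sqrt (u i) := by
      rw [Real.sqrt_div (hu i).le, div_mul_cancel₀ _ hsqrt0ne]
    rw [hP i, hP 0]
    linear_combination (-c) * hdiv
  -- orthogonality of P to sqrt u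
  have horth : ∑ j, Real.sqrt (u j) * P j = 0 := by
    have hterm : ∀ j : Fin (n+1), Real.sqrt (u j) * P j
        = Real.sqrt (u j) * Y j - u j * c := by
      intro j
      rw [hP j]
      linear_combination (-c) * Real.sq_sqrt (hu j).le
    calc ∑ j, Real.sqrt (u j) * P j = ∑ j, (Real.sqrt (u j) * Y j - u j * c) :=
          Finset.sum_congr rfl (fun j _ => hterm j)
      _ = c - (∑ j, u j) * c := by rw [Finset.sum_sub_distrib, ← Finset.sum_mul, hc]
      _ = 0 := by rw [hsum]; ring
  have horthS : ∑ j ∈ S, Real.sqrt (u j) * P j = -(Real.sqrt (u 0) * P 0) := by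
    have h := horth
    rw [← Finset.add_sum_erase _ _ (Finset.mem_univ (0 : Fin (n+1)))] at h
    linarith
  have husum : ∑ i ∈ S, u i = 1 - u 0 := by
    have h := hsum
    rw [← Finset.add_sum_erase _ _ (Finset.mem_univ (0 : Fin (n+1)))] at h
    linarith
  -- expansion of the projected square sum
  have hexp : ∑ i ∈ S, (Real.sqrt (u i / u 0) * P 0 - P i) ^ 2
      = P 0 ^ 2 / u 0 + P 0 ^ 2 + ∑ i ∈ S, P i ^ 2 := by
    have hterm : ∀ i ∈ S, (Real.sqrt (u i / u 0) * P 0 - P i) ^ 2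
        = (P 0 ^ 2 / u 0) * u i
          + (-(2 * P 0 / Real.sqrt (u 0))) * (Real.sqrt (u i) * P i) + P i ^ 2 := by
      intro i _
      have hsqi : Real.sqrt (u i) ^ 2 = u i := Real.sq_sqrt (hu i).le
      have hdiv : Real.sqrt (u i / u 0) * Real.sqrt (u 0) = Real.sqrt (u i) := by
        rw [Real.sqrt_div (hu i).le, div_mul_cancel₀ _ hsqrt0ne]
      have hs : Real.sqrt (u i / u 0) ^ 2 = u i / u 0 :=
        Real.sq_sqrt (div_nonneg (hu i).le hu0.le)
      have hinvb : Real.sqrt (u 0) * (Real.sqrt (u 0))⁻¹ = 1 := mul_inv_cancel₀ hsqrt0ne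
      linear_combination P 0 ^ 2 * hs - 2 * P 0 * P i * (Real.sqrt (u 0))⁻¹ * hdiv
        + 2 * P 0 * P i * Real.sqrt (u i / u 0) * hinvb
    calc ∑ i ∈ S, (Real.sqrt (u i / u 0) * P 0 - P i) ^ 2
        = ∑ i ∈ S, ((P 0 ^ 2 / u 0) * u i
            + (-(2 * P 0 / Real.sqrt (u 0))) * (Real.sqrt (u i) * P i) + P i ^ 2) :=
          Finset.sum_congr rfl hterm
      _ = (P 0 ^ 2 / u 0) * (∑ i ∈ S, u i)
            + (-(2 * P 0 / Real.sqrt (u 0))) * (∑ i ∈ S, Real.sqrt (u i) * P i)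
            + ∑ i ∈ S, P i ^ 2 := by
          rw [Finset.sum_add_distrib, Finset.sum_add_distrib, ← Finset.mul_sum,
            ← Finset.mul_sum]
      _ = P 0 ^ 2 / u 0 + P 0 ^ 2 + ∑ i ∈ S, P i ^ 2 := by
          rw [husum, horthS]
          have hinvb : Real.sqrt (u 0) * (Real.sqrt (u 0))⁻¹ = 1 := mul_inv_cancel₀ hsqrt0ne
          have hinvu : u 0 * (u 0)⁻¹ = 1 := mul_inv_cancel₀ hu0.ne'
          linear_combination (-(P 0 ^ 2)) * hinvu + 2 * P 0 ^ 2 * hinvb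
  have hYP : ∑ i ∈ S, D i * (Real.sqrt (u i / u 0) * Y 0 - Y i) ^ 2
      = ∑ i ∈ S, D i * (Real.sqrt (u i / u 0) * P 0 - P i) ^ 2 :=
    Finset.sum_congr rfl (fun i _ => by rw [hPinv i])
  constructor
  · rw [key Y, key P, hYP]
  · rw [key Y, hYP]
    have hb1 : ∑ i ∈ S, D i * (Real.sqrt (u i / u 0) * P 0 - P i) ^ 2
        ≥ Dstar * ∑ i ∈ S, (Real.sqrt (u i / u 0) * P 0 - P i) ^ 2 := by
      rw [Finset.mul_sum]
      apply Finset.sum_le_sum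
      intro i hi
      exact mul_le_mul_of_nonneg_right (hDmin i (Finset.ne_of_mem_erase hi))
        (sq_nonneg _)
    have hb2 : Dstar * ∑ i ∈ S, (Real.sqrt (u i / u 0) * P 0 - P i) ^ 2
        ≥ Dstar * (P 0 ^ 2 / u 0 + ∑ i ∈ S, P i ^ 2) := by
      rw [hexp]
      apply mul_le_mul_of_nonneg_left _ hDstar.le
      nlinarith [sq_nonneg (P 0)]
    linarith
end

section
/- Let u = (u_0,...,u_n) and ū = (ū_0,...,ū_n) be points of the unit simplex in ℝ^{n+1} (u_i, ū_i ≥ 0, ∑ u_i = ∑ ū_i = 1) with ū_i > 0 for all i. Then ∑_{i=0}^n u_i log(u_i/ū_i) ≥ (1/2) ∑_{i=0}^n (u_i − ū_i)², where terms with u_i = 0 are interpreted as 0. -/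
/-! For fixed `0 < v ≤ 1`, the function `F x = x log (x / v) - (x - v) - (x - v)^2 / 2` has
derivative `log (x / v) - (x - v)`, which by `log y ≤ y - 1` and `1 - 1/y ≤ log y` is `≤ 0`
for `x < v` and `≥ 0` for `v < x ≤ 1`. So `F ≥ F v = 0` on `[0, 1]`. Summing over the
coordinates, the linear terms `u i - ubar i` cancel since both vectors have total mass `1`. -/

open Finset

lemma le_apply_of_hasDerivAt_of_sign_change {f f' : ℝ → ℝ} {s : Set ℝ} [s.OrdConnected]
    {v x : ℝ} (hv : v ∈ s) (hx : x ∈ s) (hf : ∀ y ∈ s, HasDerivAt f (f' y) y)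
    (hleft : ∀ y ∈ s, y < v → f' y ≤ 0) (hright : ∀ y ∈ s, v < y → 0 ≤ f' y) :
    f v ≤ f x := by
  have hcont : ∀ a b, a ∈ s → b ∈ s → ContinuousOn f (Set.Icc a b) := fun a b ha hb y hy =>
    (hf y (Set.Icc_subset s ha hb hy)).continuousAt.continuousWithinAt
  have hderiv : ∀ a b, a ∈ s → b ∈ s → ∀ y ∈ interior (Set.Icc a b),
      HasDerivWithinAt f (f' y) (interior (Set.Icc a b)) y := fun a b ha hb y hy =>
    (hf y (Set.Icc_subset s ha hb (interior_subset hy))).hasDerivWithinAt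
  rcases le_total x v with hxv | hvx
  · refine antitoneOn_of_hasDerivWithinAt_nonpos (convex_Icc x v) (hcont x v hx hv)
      (hderiv x v hx hv) (fun y hy => ?_) ⟨le_rfl, hxv⟩ ⟨hxv, le_rfl⟩ hxv
    rw [interior_Icc] at hy
    exact hleft y (Set.Icc_subset s hx hv (Set.Ioo_subset_Icc_self hy)) hy.2
  · refine monotoneOn_of_hasDerivWithinAt_nonneg (convex_Icc v x) (hcont v x hv hx)
      (hderiv v x hv hx) (fun y hy => ?_) ⟨le_rfl, hvx⟩ ⟨hvx, le_rfl⟩ hvx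
    rw [interior_Icc] at hy
    exact hright y (Set.Icc_subset s hv hx (Set.Ioo_subset_Icc_self hy)) hy.1

namespace Real

lemma log_div_le_sub {x v : ℝ} (hx : 0 < x) (hv1 : v ≤ 1) (hxv : x ≤ v) :
    log (x / v) ≤ x - v := by
  have hv : 0 < v := hx.trans_le hxv
  calc log (x / v) ≤ x / v - 1 := log_le_sub_one_of_pos (div_pos hx hv)
    _ = (x - v) / v := by field_simp
    _ ≤ x - v := by rw [div_le_iff₀ hv]; nlinarith

lemma sub_le_log_div {x v : ℝ} (hv : 0 < v) (hx1 : x ≤ 1) (hvx : v ≤ x) :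
    x - v ≤ log (x / v) := by
  have hx : 0 < x := hv.trans_le hvx
  calc x - v ≤ (x - v) / x := by rw [le_div_iff₀ hx]; nlinarith
    _ = 1 - (x / v)⁻¹ := by field_simp
    _ ≤ log (x / v) := one_sub_inv_le_log_of_pos (div_pos hx hv)

lemma hasDerivAt_mul_log_div {x v : ℝ} (hx : x ≠ 0) (hv : v ≠ 0) :
    HasDerivAt (fun y => y * log (y / v)) (log (x / v) + 1) x := by
  refine ((hasDerivAt_id' x).mul
    (((hasDerivAt_id' x).div_const v).log (div_ne_zero hx hv))).congr_deriv ?_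
  field_simp

end Real

open Real in
lemma sub_add_sq_div_two_le_mul_log_div {u v : ℝ} (hu : 0 ≤ u) (hu1 : u ≤ 1) (hv : 0 < v)
    (hv1 : v ≤ 1) : (u - v) + (u - v) ^ 2 / 2 ≤ u * log (u / v) := by
  rcases hu.eq_or_lt with rfl | hu
  · simp only [zero_mul]; nlinarith
  set F : ℝ → ℝ := fun x => x * log (x / v) - (x - v) - (x - v) ^ 2 / 2
  have hF : ∀ x ∈ Set.Ioc (0 : ℝ) 1, HasDerivAt F (log (x / v) - (x - v)) x := by
    intro x hx
    refine (((hasDerivAt_mul_log_div hx.1.ne' hv.ne').sub ((hasDerivAt_id' x).sub_const v)).sub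
      ((((hasDerivAt_id' x).sub_const v).pow 2).div_const 2)).congr_deriv ?_
    ring
  have hFv : F v = 0 := by simp [F]
  have hFu : 0 ≤ F u := hFv ▸ le_apply_of_hasDerivAt_of_sign_change (s := Set.Ioc 0 1)
    ⟨hv, hv1⟩ ⟨hu, hu1⟩ hF
    (fun x hx hxv => sub_nonpos.2 (log_div_le_sub hx.1 hv1 hxv.le))
    (fun x hx hvx => sub_nonneg.2 (sub_le_log_div hv hx.2 hvx.le))
  simp only [F] at hFu
  linarith

theorem csiszar_kullback_simplex (n : ℕ) (u ubar : Fin (n+1) → ℝ)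
    (hu : ∀ i, 0 ≤ u i) (hubar : ∀ i, 0 < ubar i)
    (hsum : ∑ i, u i = 1) (hsumbar : ∑ i, ubar i = 1) :
    ∑ i, u i * Real.log (u i / ubar i) ≥ (1/2) * ∑ i, (u i - ubar i) ^ 2 := by
  have le_one : ∀ w : Fin (n+1) → ℝ, (∀ i, 0 ≤ w i) → ∑ i, w i = 1 → ∀ i, w i ≤ 1 :=
    fun w hw hw1 i => hw1 ▸ single_le_sum (fun j _ => hw j) (mem_univ i)
  have hlin : ∑ i, (u i - ubar i) = 0 := by rw [sum_sub_distrib, hsum, hsumbar, sub_self]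
  calc (1/2) * ∑ i, (u i - ubar i) ^ 2 = ∑ i, ((u i - ubar i) + (u i - ubar i) ^ 2 / 2) := by
        rw [sum_add_distrib, hlin, zero_add, mul_sum]
        exact sum_congr rfl fun i _ => by ring
    _ ≤ ∑ i, u i * Real.log (u i / ubar i) := sum_le_sum fun i _ =>
        sub_add_sq_div_two_le_mul_log_div (hu i) (le_one u hu hsum i) (hubar i)
          (le_one ubar (fun j => (hubar j).le) hsumbar i)
end

section
/- Let h: 𝒟 → ℝ, h(u) = ∑_{i=1}^n ∫_{u_i^D}^{u_i} log(s/u_i^D) ds + ∫_{u_0^D}^{1−∑_{i=1}^n u_i} log(s/u_0^D) ds, where 𝒟 = {u ∈ (0,1)^n : ∑ u_i < 1}, u^D ∈ 𝒟 is fixed, and u_0^D = 1 − ∑ u_i^D. Then h is convex on 𝒟 and ∂h/∂u_i (u) = log(u_i/u_0) − log(u_i^D/u_0^D) with u_0 = 1 − ∑_{j=1}^n u_j; moreover for all u, v ∈ 𝒟: h(u) − h(v) ≤ ∑_{i=1}^n (u_i − v_i)(log(u_i/u_0) − log(u_i^D/u_0^D)) evaluated at u (i.e., the convexity inequality h(v)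 ≥ h(u) + h'(u)·(v−u) holds). -/
/-!
With `F_a(x) = ∫_a^x log (s / a) ds = a · klFun (x / a)`, the density is
`h u = ∑ᵢ F_{u_iᴰ}(u_i) + F_{u_0ᴰ}(1 - ∑ᵢ u_i)`. Each `F_a` is convex on `(0, ∞)` with
derivative `log (x / a)`, and its tangent-line defect is explicit:
`F_a(y) - F_a(x) - (y - x) log (x / a) = x · klFun (y / x) ≥ 0`. Summing these over the `n`
coordinates and the complementary fraction, whose increment is `-∑ᵢ (v_i - u_i)`, gives the
gradient inequality; a function lying above all its supporting hyperplanes is convex, and the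
partial derivatives come from the fundamental theorem of calculus.
-/

open Finset Real InformationTheory

lemma convexOn_of_forall_add_le {𝕜 E : Type*} [Field 𝕜] [LinearOrder 𝕜] [IsStrictOrderedRing 𝕜]
    [AddCommGroup E] [Module 𝕜 E] {s : Set E} {f : E → 𝕜} (L : E → E →ₗ[𝕜] 𝕜)
    (hs : Convex 𝕜 s) (hL : ∀ x ∈ s, ∀ y ∈ s, f x + L x (y - x) ≤ f y) : ConvexOn 𝕜 s f := by
  refine ⟨hs, fun x hx y hy a b ha hb hab => ?_⟩
  set z := a • x + b • y
  have hz : z ∈ s := hs hx hy ha hb hab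
  have hcancel : a • (x - z) + b • (y - z) = 0 := by
    obtain rfl : b = 1 - a := by linear_combination hab
    simp only [z]
    module
  have hsupport : f z + L z (a • (x - z) + b • (y - z)) ≤ a * f x + b * f y := by
    rw [map_add, map_smul, map_smul, smul_eq_mul, smul_eq_mul]
    linear_combination a * hL z hz x hx + b * hL z hz y hy - f z * hab
  rwa [hcancel, map_zero, add_zero] at hsupport

lemma Fintype.sum_apply_update {ι α M : Type*} [Fintype ι] [DecidableEq ι] [AddCommMonoid M]
    (f : ι → α → M) (u : ι → α) (i : ι) (t : α) :
    ∑ j, f j (Function.update u i t j) = f i t + ∑ j ∈ univ \ {i}, f j (u j) := by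
  simp_rw [Function.apply_update f, sum_update_of_mem (mem_univ i)]

lemma convex_setOf_pos_lt_one_sum_lt_one {ι : Type*} [Fintype ι] :
    Convex ℝ {u : ι → ℝ | (∀ i, 0 < u i ∧ u i < 1) ∧ ∑ i, u i < 1} := by
  have hsum : IsLinearMap ℝ (fun u : ι → ℝ => ∑ i, u i) :=
    ⟨fun _ _ => sum_add_distrib, fun c u => by simp [mul_sum]⟩
  have hset : {u : ι → ℝ | (∀ i, 0 < u i ∧ u i < 1) ∧ ∑ i, u i < 1}
      = Set.univ.pi (fun _ => Set.Ioo 0 1) ∩ {u | ∑ i, u i < 1} := by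
    ext u
    simp [Set.mem_pi]
  rw [hset]
  exact (convex_pi fun _ _ => convex_Ioo 0 1).inter (convex_halfSpace_lt hsum 1)

section IntegralLogDiv

variable {a x y : ℝ}

lemma integral_log_div_eq_mul_klFun (ha : 0 < a) (hx : 0 < x) :
    ∫ s in a..x, log (s / a) = a * klFun (x / a) := by
  have hsub : ∀ s ∈ Set.uIcc a x, log (s / a) = log s - log a := fun s hs =>
    log_div (Set.ordConnected_Ioi.uIcc_subset ha hx hs).ne' ha.ne'
  rw [intervalIntegral.integral_congr hsub, intervalIntegral.integral_sub
    intervalIntegral.intervalIntegrable_log' intervalIntegrable_const, integral_log,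
    intervalIntegral.integral_const, smul_eq_mul, klFun_apply, log_div hx.ne' ha.ne']
  field_simp
  ring

lemma hasDerivAt_integral_log_div (ha : 0 < a) (hx : 0 < x) :
    HasDerivAt (fun t => ∫ s in a..t, log (s / a)) (log (x / a)) x := by
  have hcont : ContinuousOn (fun s => log (s / a)) (Set.Ioi 0) :=
    (continuousOn_id.div_const a).log fun s hs => (div_pos hs ha).ne'
  exact intervalIntegral.integral_hasDerivAt_right
    (hcont.mono (Set.ordConnected_Ioi.uIcc_subset ha hx)).intervalIntegrable
    (hcont.stronglyMeasurableAtFilter isOpen_Ioi _ hx)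
    (hcont.continuousAt (isOpen_Ioi.mem_nhds hx))

lemma integral_log_div_add_mul_le (ha : 0 < a) (hx : 0 < x) (hy : 0 < y) :
    (∫ s in a..x, log (s / a)) + (y - x) * log (x / a) ≤ ∫ s in a..y, log (s / a) := by
  have hdefect : (∫ s in a..y, log (s / a)) - ((∫ s in a..x, log (s / a)) + (y - x) * log (x / a))
      = x * klFun (y / x) := by
    rw [integral_log_div_eq_mul_klFun ha hx, integral_log_div_eq_mul_klFun ha hy]
    simp only [klFun_apply, log_div hx.ne' ha.ne', log_div hy.ne' ha.ne', log_div hy.ne' hx.ne']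
    field_simp
    ring
  linarith [mul_nonneg hx.le (klFun_nonneg (div_pos hy hx).le)]

end IntegralLogDiv

section EntropyDensity

variable {ι : Type*} [Fintype ι]

noncomputable def entropyDensity (a : ι → ℝ) (a0 : ℝ) (u : ι → ℝ) : ℝ :=
  (∑ i, ∫ s in a i..u i, log (s / a i)) + ∫ s in a0..(1 - ∑ i, u i), log (s / a0)

variable {a : ι → ℝ} {a0 : ℝ}

lemma entropyDensity_add_sum_mul_le (ha : ∀ i, 0 < a i) (ha0 : 0 < a0) {u v : ι → ℝ}
    (hu : ∀ i, 0 < u i) (hu0 : 0 < 1 - ∑ i, u i) (hv : ∀ i, 0 < v i) (hv0 : 0 < 1 - ∑ i, v i) :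
    entropyDensity a a0 u + ∑ i, (v i - u i) * (log (u i / a i) - log ((1 - ∑ j, u j) / a0))
      ≤ entropyDensity a a0 v := by
  have hcoord := sum_le_sum fun i (_ : i ∈ univ) =>
    integral_log_div_add_mul_le (ha i) (hu i) (hv i)
  have hcompl := integral_log_div_add_mul_le ha0 hu0 hv0
  have hincr : (1 - ∑ i, v i) - (1 - ∑ i, u i) = -(∑ i, v i - ∑ i, u i) := by ring
  rw [sum_add_distrib] at hcoord
  rw [hincr] at hcompl
  simp only [entropyDensity, mul_sub, sum_sub_distrib, ← sum_mul]
  linarith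

lemma hasDerivAt_entropyDensity_update [DecidableEq ι] (ha : ∀ i, 0 < a i) (ha0 : 0 < a0)
    {u : ι → ℝ} {i : ι} (hui : 0 < u i) (hu0 : 0 < 1 - ∑ j, u j) :
    HasDerivAt (fun t => entropyDensity a a0 (Function.update u i t))
      (log (u i / a i) - log ((1 - ∑ j, u j) / a0)) (u i) := by
  set C := ∑ j ∈ univ \ {i}, ∫ s in a j..u j, log (s / a j)
  set S := ∑ j ∈ univ \ {i}, u j
  have hsplit : (fun t => entropyDensity a a0 (Function.update u i t))
      = fun t => (∫ s in a i..t, log (s / a i)) + C + ∫ s in a0..(1 - (t + S)), log (s / a0) := by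
    funext t
    rw [entropyDensity, Fintype.sum_apply_update (fun j x => ∫ s in a j..x, log (s / a j)),
      Fintype.sum_apply_update (fun _ x => x)]
  have hsum : ∑ j, u j = u i + S :=
    sum_eq_add_sum_sdiff_singleton_of_mem (mem_univ i) u
  have hcompl : HasDerivAt (fun t => 1 - (t + S)) (-1) (u i) := by
    simpa using ((hasDerivAt_id (u i)).add_const S).const_sub 1
  rw [hsum] at hu0
  rw [hsplit, hsum]
  refine (((hasDerivAt_integral_log_div (ha i) hui).add_const C).add
    ((hasDerivAt_integral_log_div ha0 hu0).comp (u i) hcompl)).congr_deriv ?_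
  ring

end EntropyDensity

theorem entropy_density_convex (n : ℕ) (uD : Fin n → ℝ) (u0D : ℝ)
    (hD : ∀ i, 0 < uD i ∧ uD i < 1) (hDsum : (∑ i, uD i) < 1)
    (hu0D : u0D = 1 - ∑ i, uD i)
    (𝒟 : Set (Fin n → ℝ))
    (h𝒟 : 𝒟 = {u | (∀ i, 0 < u i ∧ u i < 1) ∧ (∑ i, u i) < 1})
    (h : (Fin n → ℝ) → ℝ)
    (hh : ∀ u, h u = (∑ i, ∫ s in (uD i)..(u i), Real.log (s / uD i))
        + ∫ s in u0D..(1 - ∑ i, u i), Real.log (s / u0D)) :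
    ConvexOn ℝ 𝒟 h
    ∧ (∀ u ∈ 𝒟, ∀ i,
        HasDerivAt (fun t => h (Function.update u i t))
          (Real.log (u i / (1 - ∑ j, u j)) - Real.log (uD i / u0D)) (u i))
    ∧ (∀ u ∈ 𝒟, ∀ v ∈ 𝒟,
        h v ≥ h u + ∑ i, (v i - u i) *
          (Real.log (u i / (1 - ∑ j, u j)) - Real.log (uD i / u0D))) := by
  obtain rfl : h = entropyDensity uD u0D := funext hh
  have huD i : 0 < uD i := (hD i).1
  have hu0D_pos : 0 < u0D := by linarith
  have hmem : ∀ u ∈ 𝒟, (∀ i, 0 < u i) ∧ 0 < 1 - ∑ i, u i := by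
    rintro u hu
    rw [h𝒟] at hu
    exact ⟨fun i => (hu.1 i).1, by linarith [hu.2]⟩
  have hgrad : ∀ u ∈ 𝒟, ∀ i, log (u i / (1 - ∑ j, u j)) - log (uD i / u0D)
      = log (u i / uD i) - log ((1 - ∑ j, u j) / u0D) := by
    rintro u hu i
    obtain ⟨hu, hu0⟩ := hmem u hu
    rw [log_div (hu i).ne' hu0.ne', log_div (huD i).ne' hu0D_pos.ne',
      log_div (hu i).ne' (huD i).ne', log_div hu0.ne' hu0D_pos.ne']
    ring
  have htangent : ∀ u ∈ 𝒟, ∀ v ∈ 𝒟, entropyDensity uD u0D v ≥ entropyDensity uD u0D u +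
      ∑ i, (v i - u i) * (log (u i / (1 - ∑ j, u j)) - log (uD i / u0D)) := by
    rintro u hu v hv
    simp only [hgrad u hu]
    exact entropyDensity_add_sum_mul_le huD hu0D_pos (hmem u hu).1 (hmem u hu).2
      (hmem v hv).1 (hmem v hv).2
  refine ⟨?_, fun u hu i => ?_, htangent⟩
  · refine convexOn_of_forall_add_le
      (fun u => ∑ i, (log (u i / (1 - ∑ j, u j)) - log (uD i / u0D)) • LinearMap.proj i)
      (h𝒟 ▸ convex_setOf_pos_lt_one_sum_lt_one) fun u hu v hv => ?_
    simpa [mul_comm] using htangent u hu v hv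
  · rw [hgrad u hu]
    exact hasDerivAt_entropyDensity_update huD hu0D_pos ((hmem u hu).1 i) (hmem u hu).2
end
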